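/- arXiv:1505.01635 — 2 statements merged into one kernel-verified Lean document; each statement's English description precedes it below -/
import Mathlib

section
/- Evaluation properties of the E6 hyperpolynomial of the (3,2) torus knot at t = ±1: in Z[q, a] one has (i) HD32(q, 1, a) = HDA32w2(q, 1, a); (ii) HD32(q, -1, a) = HDA32w2(q, -1, a); (iii) HD32(q, 1, a) = (1 + q + a*q)^2, i.e., HD32(q,1,a) is the square of the type-A superpolynomial HDA32w1 evaluated at t = 1. -/
open LaurentPolynomial

/-- The E6 hyperpolynomial of the (3,2) torus knot (DAHA conventions). -/
def HD32 {R : Type*} [CommRing R] (q t a : R) : R :=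
  1 + q*t + q*t^4 + q*t^9*a + q*t^12*a + q^2*t^8 + q^2*t^13*a + q^2*t^16*a + q^2*t^21*a^2

/-- The type-A DAHA-superpolynomial of the (3,2) torus knot colored by ω₂;
`ti` stands for the inverse t⁻¹ of `t`. -/
def HDA32w2 {R : Type*} [CommRing R] (q t ti a : R) : R :=
  1 + a^2*q^2*ti + q*t + q*t^2 + q^2*t^4 + a*(q + q*ti + q^2*t + q^2*t^2)

/-- The type-A DAHA-superpolynomial of the (3,2) torus knot colored by ω₁. -/
def HDA32w1 {R : Type*} [CommRing R] (q t a : R) : R :=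
  1 + a*q + q*t


/-- The Laurent polynomial ring ℤ[q^{±1}, a^{±1}]: `q` is the inner variable, `a` the outer. -/
abbrev Rqa : Type := LaurentPolynomial (LaurentPolynomial ℤ)

/-- The variable q in ℤ[q^{±1}, a^{±1}]. -/
noncomputable def qv : Rqa := C (T 1)
/-- The variable a in ℤ[q^{±1}, a^{±1}]. -/
noncomputable def av : Rqa := T 1

/-- Evaluation properties of the E6 hyperpolynomial of the (3,2) torus knot at t = ±1,
in the Laurent polynomial ring ℤ[q^{±1}, a^{±1}] (note that t⁻¹ = ±1 when t = ±1). -/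
theorem E6_hyperpolynomial_T32_evaluations :
    HD32 qv 1 av = HDA32w2 qv 1 1 av ∧
    HD32 qv (-1) av = HDA32w2 qv (-1) (-1) av ∧
    HD32 qv 1 av = (1 + qv + av*qv)^2 ∧
    HD32 qv 1 av = (HDA32w1 qv 1 av)^2 := by
  refine ⟨?_, ?_, ?_, ?_⟩ <;> simp only [HD32, HDA32w2, HDA32w1] <;> ring
end

section
/- Evaluation properties of the E6 hyperpolynomial of the (5,2) torus knot at t = ±1: in Z[q, a] one has (i) HD52(q, 1, a) = HDA52w2(q, 1, a); (ii) HD52(q, -1, a) = HDA52w2(q, -1, a); (iii) HD52(q, 1, a) = (1 + q + a*q + q^2 + a*q^2)^2, i.e., HD52(q,1,a) is the square of the type-A superpolynomial HDA52w1 evaluated at t = 1. -/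
set_option maxHeartbeats 1000000

open LaurentPolynomial

/-- The E6 hyperpolynomial of the (5,2) torus knot (DAHA conventions). -/
def HD52 {R : Type*} [CommRing R] (q t a : R) : R :=
  1 + q*t + q*t^4 + q*t^9*a + q*t^12*a + q^2*t^2 + q^2*t^5 + q^2*t^8 + q^2*t^10*a
  + 2*q^2*t^13*a + q^2*t^16*a + q^2*t^21*a^2 + q^3*t^9 + q^3*t^12 + q^3*t^14*a
  + 2*q^3*t^17*a + q^3*t^20*a + q^3*t^22*a^2 + q^3*t^25*a^2 + q^4*t^16 + q^4*t^21*a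
  + q^4*t^24*a + q^4*t^29*a^2

/-- The type-A DAHA-superpolynomial of the (5,2) torus knot colored by ω₂;
`ti` stands for the inverse t⁻¹ of `t`. -/
def HDA52w2 {R : Type*} [CommRing R] (q t ti a : R) : R :=
  1 + q*t + q*t^2 + q^2*t^2 + q^2*t^3 + q^2*t^4 + q^3*t^5 + q^3*t^6 + q^4*t^8
  + a^2*(q^3 + q^2*ti + q^3*t + q^4*t^3)
  + a*(q + q^2 + q*ti + 2*q^2*t + q^2*t^2 + q^3*t^2 + 2*q^3*t^3 + q^3*t^4 + q^4*t^5 + q^4*t^6)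

/-- The type-A DAHA-superpolynomial of the (5,2) torus knot colored by ω₁. -/
def HDA52w1 {R : Type*} [CommRing R] (q t a : R) : R :=
  1 + q*t + q^2*t^2 + a*(q + q^2*t)

/-- The type-A DAHA-superpolynomial of the (4,3) torus knot colored by ω₁. -/
def HDA43w1 {R : Type*} [CommRing R] (q t a : R) : R :=
  1 + a^2*q^3 + q*t + q^2*t + q^2*t^2 + q^3*t^3 + a*(q + q^2 + q^2*t + q^3*t + q^3*t^2)

/-- Evaluation properties of the E6 hyperpolynomial of the (5,2) torus knot at t = ±1,
in the Laurent polynomial ring ℤ[q^{±1}, a^{±1}] (note that t⁻¹ = ±1 when t = ±1). -/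
theorem E6_hyperpolynomial_T52_evaluations :
    HD52 qv 1 av = HDA52w2 qv 1 1 av ∧
    HD52 qv (-1) av = HDA52w2 qv (-1) (-1) av ∧
    HD52 qv 1 av = (1 + qv + av*qv + qv^2 + av*qv^2)^2 ∧
    HD52 qv 1 av = (HDA52w1 qv 1 av)^2 := by
  refine ⟨?_, ?_, ?_, ?_⟩ <;> simp only [HD52, HDA52w2, HDA52w1] <;> ring
end
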